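/- Let κ be supercompact with the Magidor characterization, and suppose M ≺ V_μ is a κ-Magidor model with collapse V_{γ̄} and π(κ) = κ̄ where cof(γ̄) ≥ κ̄. Then M is closed under sequences of length < κ̄ taken from M, i.e., every subset of M of size < κ̄ that is an element of V_μ and a subset of M of size less than sup(M ∩ κ) belongs to M. -/

import Mathlib

noncomputable section
namespace GM

open ZFSet

attribute [local instance] Classical.propDecidable

/-- Classically, every map is definable; we use this to form images. -/
noncomputable def img (f : ZFSet → ZFSet) (s : ZFSet) : ZFSet :=
  @ZFSet.image f (Classical.allZFSetDefinable _) s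

noncomputable def Vzf (o : Ordinal.{0}) : ZFSet.{0} :=
  ZFSet.sUnion (ZFSet.range fun i : o.ToType =>
    (Vzf (@Ordinal.typein o.ToType (· < ·) isWellOrder_lt i)).powerset)
termination_by o
decreasing_by exact Ordinal.typein_lt_self i

inductive Fml : Type
  | mem : Nat → Nat → Fml
  | eq : Nat → Nat → Fml
  | imp : Fml → Fml → Fml
  | neg : Fml → Fml
  | all : Fml → Fml

def Sat (A : ZFSet) : Fml → (Nat → ZFSet) → Prop
  | .mem i j, v => v i ∈ v j
  | .eq i j, v => v i = v j
  | .imp φ ψ, v => Sat A φ v → Sat A ψ v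
  | .neg φ, v => ¬ Sat A φ v
  | .all φ, v => ∀ x ∈ A, Sat A φ (fun n => match n with | 0 => x | n + 1 => v n)

def ElemSub (M A : ZFSet) : Prop :=
  M ⊆ A ∧ ∀ (φ : Fml) (v : Nat → ZFSet), (∀ n, v n ∈ M) → (Sat M φ v ↔ Sat A φ v)

def ElemEmbed (A B : ZFSet) (j : ZFSet → ZFSet) : Prop :=
  (∀ x ∈ A, j x ∈ B) ∧
    ∀ (φ : Fml) (v : Nat → ZFSet), (∀ n, v n ∈ A) → (Sat A φ v ↔ Sat B φ (fun n => j (v n)))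

def IsOrd (x : ZFSet) : Prop := x.IsTransitive ∧ ∀ y ∈ x, ZFSet.IsTransitive y

def IsZFn (f : ZFSet) : Prop :=
  (∀ p ∈ f, ∃ x y, p = ZFSet.pair x y) ∧
    ∀ x y y', ZFSet.pair x y ∈ f → ZFSet.pair x y' ∈ f → y = y'

def IsTupleOf (X x : ZFSet) : Prop :=
  ∃ n ∈ ZFSet.omega,
    (∀ p ∈ x, ∃ i ∈ n, ∃ v ∈ X, p = ZFSet.pair i v) ∧ ∀ i ∈ n, ∃! v, ZFSet.pair i v ∈ x

def HullZ (M X : ZFSet) : ZFSet :=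
  (ZFSet.sUnion (ZFSet.sUnion (ZFSet.sUnion M))).sep fun y =>
    ∃ f ∈ M, IsZFn f ∧ ∃ x, IsTupleOf X x ∧ ZFSet.pair x y ∈ f

def zcard (x : ZFSet) : Cardinal.{1} := Cardinal.mk x.toSet

def ordSup (M : ZFSet) : Ordinal :=
  sSup {o : Ordinal | ∃ x, x ∈ M ∧ IsOrd x ∧ x.rank = o}

/-- The (relative) Mostowski collapse map of the class of elements of `N`. -/
noncomputable def clps (N : ZFSet) (x : ZFSet) : ZFSet :=
  img (fun y => if h : y.rank < x.rank then clps N y else ∅) (x.sep fun y => y ∈ N)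
termination_by x.rank
decreasing_by all_goals assumption

/-- Evaluation of a name by a filter `G`. -/
noncomputable def val (G : Set ZFSet) (x : ZFSet) : ZFSet :=
  img (fun y => if h : y.rank < x.rank then val G y else ∅)
    ((ZFSet.sUnion (ZFSet.sUnion x)).sep fun y => ∃ p, p ∈ G ∧ ZFSet.pair y p ∈ x)
termination_by x.rank
decreasing_by all_goals assumption

/-- The projection `M ↾ α`: the image of `M` under the transitive collapse of `Hull(M, V_α)`. -/
noncomputable def proj (α : Ordinal) (M : ZFSet) : ZFSet :=
  img (clps (HullZ M (Vzf α))) M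

/-- `E = {α < λ : V_α ≺ V_λ}`. -/
def Eset (lam : Ordinal) : Set Ordinal := {a | a < lam ∧ ElemSub (Vzf a) (Vzf lam)}

def IsAmod (α : Ordinal) (A : ZFSet) : Prop :=
  A.IsTransitive ∧ ElemSub (Vzf α) A ∧ zcard A = zcard (Vzf α)

/-- `M` is an α-model (a virtual model at level `α`). -/
def IsVM (κ lam α : Ordinal) (M : ZFSet) : Prop :=
  α ∈ Eset lam ∧ zcard M < Cardinal.lift.{1,0} κ.card ∧
    IsAmod α (HullZ M (Vzf α)) ∧ ElemSub M (HullZ M (Vzf α))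

def IsVirtual (κ lam : Ordinal) (M : ZFSet) : Prop := ∃ α, IsVM κ lam α M

/-- `η(M)`, the level of a virtual model. -/
def levelOf (κ lam : Ordinal) (M : ZFSet) : Ordinal := sSup {a | IsVM κ lam a M}

def IsIsoOn (D₁ D₂ : ZFSet) (σ : ZFSet → ZFSet) : Prop :=
  (∀ x ∈ D₁, σ x ∈ D₂) ∧ (∀ y ∈ D₂, ∃ x ∈ D₁, σ x = y) ∧
    (∀ x ∈ D₁, ∀ y ∈ D₁, σ x = σ y → x = y) ∧
    ∀ x ∈ D₁, ∀ y ∈ D₁, (x ∈ y ↔ σ x ∈ σ y)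

/-- `M ≅_α N` : an isomorphism of `M` onto `N` extending to `Hull(M,V_α) → Hull(N,V_α)`. -/
def IsoAt (α : Ordinal) (M N : ZFSet) : Prop :=
  ∃ σ : ZFSet → ZFSet,
    IsIsoOn (HullZ M (Vzf α)) (HullZ N (Vzf α)) σ ∧ img σ M = N

/-- `M ∈_α N`. -/
def memAt (α : Ordinal) (M N : ZFSet) : Prop := ∃ M', M' ∈ N ∧ IsoAt α M M'

/-- `κ_M = sup (M ∩ κ)`. -/
def kappaOf (κ : Ordinal) (M : ZFSet) : Ordinal :=
  sSup {o : Ordinal | ∃ x, x ∈ M ∧ IsOrd x ∧ x.rank = o ∧ o < κ}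

def activeAt (κ lam α : Ordinal) (M : ZFSet) : Prop :=
  α ∈ Eset lam ∧ α ≤ levelOf κ lam M ∧
    ∀ β < α, ∃ x, x ∈ HullZ M (Vzf (kappaOf κ M)) ∧ IsOrd x ∧
      x.rank ∈ Eset lam ∧ β ≤ x.rank ∧ x.rank < α

def stronglyActiveAt (κ lam α : Ordinal) (M : ZFSet) : Prop :=
  α ∈ Eset lam ∧ α ≤ levelOf κ lam M ∧
    ∀ β < α, ∃ x, x ∈ M ∧ IsOrd x ∧ x.rank ∈ Eset lam ∧ β ≤ x.rank ∧ x.rank < α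

def aSet (κ lam : Ordinal) (M : ZFSet) : Set Ordinal := {a | activeAt κ lam a M}

def alphaMax (κ lam : Ordinal) (M N : ZFSet) : Ordinal :=
  sSup (aSet κ lam M ∩ aSet κ lam N)

/-- Magidor model (with respect to `κ`). -/
def IsMagidor (κ : Ordinal) (M : ZFSet) : Prop :=
  ∃ γ' : Ordinal, γ' < κ ∧ img (clps M) M = Vzf γ' ∧
    ∃ k, k ∈ M ∧ IsOrd k ∧ k.rank = κ ∧
      ((clps M k).rank).card ≤ Ordinal.cof γ' ∧ Vzf ((clps M k).rank) ⊆ M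

def CountableZ (M : ZFSet) : Prop := M.toSet.Countable

/-- The meet `N ∧ M` of a Magidor model `N` and a countable model `M` is defined
when `N ∈_α M` for `α = max (a(N) ∩ a(M))`. -/
def meetDef (κ lam : Ordinal) (N M : ZFSet) : Prop :=
  memAt (alphaMax κ lam N M) N M

/-- The meet `N ∧ M`. -/
noncomputable def meetModel (κ lam : Ordinal) (N M : ZFSet) : ZFSet :=
  let pre := N.sep fun x => clps N x ∈ M
  let η := sSup {γ | γ ∈ Eset lam ∧ γ ≤ alphaMax κ lam N M ∧ γ < ordSup pre}
  proj η pre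

/-- `S` is an α-chain. -/
def ChainAt (α : Ordinal) (S : Set ZFSet) : Prop :=
  ∀ M ∈ S, ∀ N ∈ S, M ≠ N →
    memAt α M N ∨ memAt α N M ∨
      ∃ P ∈ S, (memAt α M P ∧ memAt α P N) ∨ (memAt α N P ∧ memAt α P M)

/-- Magidor's characterization of supercompactness. -/
def MagidorSupercompact (κ : Ordinal) : Prop :=
  ∀ γ > κ, ∀ x ∈ Vzf γ, ∃ κbar γbar : Ordinal, κbar < γbar ∧ γbar < κ ∧
    ∃ j : ZFSet → ZFSet, ElemEmbed (Vzf γbar) (Vzf γ) j ∧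
      (∀ y ∈ Vzf κbar, j y = y) ∧
      (∃ k, k ∈ Vzf γbar ∧ IsOrd k ∧ k.rank = κbar ∧ IsOrd (j k) ∧ (j k).rank = κ) ∧
      ∃ y ∈ Vzf γbar, j y = x

/-- First component of a Kuratowski pair. -/
noncomputable def fstZ (p : ZFSet) : ZFSet := ZFSet.sUnion (ZFSet.sInter p)

/-- Second component of a Kuratowski pair. -/
noncomputable def sndZ (p : ZFSet) : ZFSet :=
  if ((ZFSet.sUnion p).sep fun x => x ∉ ZFSet.sInter p) = ∅ then fstZ p
  else ZFSet.sUnion ((ZFSet.sUnion p).sep fun x => x ∉ ZFSet.sInter p)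

/-- The set of models of a (coded) condition `p = (ℳ_p, d_p)`. -/
noncomputable def modsZ (p : ZFSet) : ZFSet := fstZ p

/-- The decoration of a (coded) condition. -/
noncomputable def decZ (p : ZFSet) : ZFSet := sndZ p

/-- `𝓛(ℳ)` : all projections of models of `ℳ` to levels where they are active. -/
def Lset (κ lam : Ordinal) (m : ZFSet) : Set ZFSet :=
  {Q | ∃ M, M ∈ m ∧ ∃ a ∈ aSet κ lam M, Q = proj a M}

/-- `M` is an `ℳ`-free node. -/
def FreeIn (κ lam : Ordinal) (m M : ZFSet) : Prop :=
  M ∈ Lset κ lam m ∧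
    ∀ N, N ∈ m → memAt (levelOf κ lam M) M N → stronglyActiveAt κ lam (levelOf κ lam M) N

/-- `m ∈ 𝕄^κ_α` : a finite meet-closed set of countable and Magidor virtual models
whose projections form δ-chains at every level `δ ∈ E ∩ (α+1)`. -/
def IsMset (κ lam α : Ordinal) (m : ZFSet) : Prop :=
  m.toSet.Finite ∧
    (∀ M, M ∈ m → IsVirtual κ lam M ∧ (CountableZ M ∨ IsMagidor κ M) ∧
      levelOf κ lam M ≤ α) ∧
    (∀ N M, N ∈ m → M ∈ m → IsMagidor κ N → CountableZ M → meetDef κ lam N M →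
      meetModel κ lam N M ∈ m) ∧
    ∀ δ ∈ Eset lam, δ ≤ α →
      ChainAt δ {Q | ∃ M, M ∈ m ∧ activeAt κ lam δ M ∧ Q = proj δ M}

/-- `p` codes a condition of `ℙ^κ_α`. -/
def IsCondZ (κ lam α : Ordinal) (p : ZFSet) : Prop :=
  IsMset κ lam α (modsZ p) ∧
    (∀ q ∈ decZ p, ∃ M e, q = ZFSet.pair M e) ∧
    (∀ M e e', ZFSet.pair M e ∈ decZ p → ZFSet.pair M e' ∈ decZ p → e = e') ∧
    ∀ M e, ZFSet.pair M e ∈ decZ p →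
      FreeIn κ lam (modsZ p) M ∧ e.toSet.Finite ∧ e ⊆ Vzf κ ∧
        ∀ N, N ∈ modsZ p → memAt (levelOf κ lam M) M N → e ∈ N

/-- The ordering of `ℙ^κ_λ` : `q ≤ p`. -/
def leC (κ lam : Ordinal) (q p : ZFSet) : Prop :=
  (∀ M, M ∈ modsZ p → ∃ N, N ∈ modsZ q ∧ proj (levelOf κ lam M) N = M) ∧
    ∀ M e, ZFSet.pair M e ∈ decZ p →
      ∃ γ ∈ Eset lam, γ ≤ levelOf κ lam M ∧
        ∃ e', ZFSet.pair (proj γ M) e' ∈ decZ q ∧ e ⊆ e'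

/-- `p ↾ M` for a Magidor model `M`. -/
noncomputable def restrictMag (κ lam : Ordinal) (p M : ZFSet) : ZFSet :=
  ZFSet.pair
    (img (fun N => proj (alphaMax κ lam N M) N)
      ((modsZ p).sep fun N => kappaOf κ N < kappaOf κ M))
    ((decZ p).sep fun q => ∃ N e, q = ZFSet.pair N e ∧ N ∈ M)

/-- The unique copy inside a countable model `M` of a model `N` (via the `α(N,M)`-isomorphism). -/
noncomputable def copyIn (κ lam : Ordinal) (M N : ZFSet) : ZFSet :=
  ZFSet.sUnion (M.sep fun N' => IsoAt (alphaMax κ lam N M) N N')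

/-- `p ↾ M` for a countable model `M`. -/
noncomputable def restrictCtble (κ lam : Ordinal) (p M : ZFSet) : ZFSet :=
  ZFSet.pair
    (M.sep fun N' => ∃ N, N ∈ modsZ p ∧ IsoAt (alphaMax κ lam N M) N N')
    (img (fun q => ZFSet.pair (copyIn κ lam M (fstZ q)) (sndZ q))
      ((decZ p).sep fun q =>
        ∃ N e, q = ZFSet.pair N e ∧ memAt (levelOf κ lam N) N M))

/-- `G` is a `V`-generic filter on `ℙ^κ_λ`. -/
def GenericOn (κ lam : Ordinal) (G : Set ZFSet) : Prop :=
  (∀ p ∈ G, IsCondZ κ lam lam p) ∧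
    (∀ p ∈ G, ∀ q, IsCondZ κ lam lam q → leC κ lam p q → q ∈ G) ∧
    (∀ p ∈ G, ∀ q ∈ G, ∃ r ∈ G, leC κ lam r p ∧ leC κ lam r q) ∧
    ∀ D : Set ZFSet,
      (∀ p, IsCondZ κ lam lam p → ∃ q ∈ D, IsCondZ κ lam lam q ∧ leC κ lam q p) →
      ∃ q ∈ G, q ∈ D

/-- The models appearing in a filter `G`. -/
def MGmods (G : Set ZFSet) : Set ZFSet := {M | ∃ p ∈ G, M ∈ modsZ p}

/-- The generic α-chain `ℳ_G^α`. -/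
def MGchain (κ lam α : Ordinal) (G : Set ZFSet) : Set ZFSet :=
  {Q | ∃ M ∈ MGmods G, activeAt κ lam α M ∧ Q = proj α M}

/-- `C_α(G) = {κ_M : M ∈ ℳ_G^α}`. -/
def Cclub (κ lam α : Ordinal) (G : Set ZFSet) : Set Ordinal :=
  {o | ∃ Q ∈ MGchain κ lam α G, kappaOf κ Q = o}

/-- `f` is (a set of ordinal pairs coding) a surjection from `a` onto `b`. -/
def SurjOnto (f : ZFSet) (a b : Ordinal) : Prop :=
  (∀ q ∈ f, ∃ x y, q = ZFSet.pair x y ∧ IsOrd x ∧ x.rank < a) ∧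
    ∀ y, IsOrd y → y.rank < b → ∃ x, ZFSet.pair x y ∈ f

/-- A subset of `Set Ordinal` is club in `δ`. -/
def IsClubIn (C : Set Ordinal) (δ : Ordinal) : Prop :=
  (∀ β < δ, ∃ γ ∈ C, β < γ ∧ γ < δ) ∧
    ∀ γ < δ, 0 < γ → (∀ β < γ, ∃ γ' ∈ C, β < γ' ∧ γ' < γ) → γ ∈ C

/-- A suitable structure: a transitive set satisfying a sufficient fragment of ZFC
(rendered here by closure under the basic set operations). -/
def Suitable (A : ZFSet) : Prop :=
  A.IsTransitive ∧ (∅ : ZFSet) ∈ A ∧ (∀ x ∈ A, ∀ y ∈ A, ({x, y} : ZFSet) ∈ A) ∧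
    ∀ x ∈ A, ZFSet.sUnion x ∈ A

/-- `E_A = {α ∈ A : A ∩ V_α ≺ A}`. -/
def EA (A : ZFSet) : Set ZFSet :=
  {a | a ∈ A ∧ IsOrd a ∧ ElemSub (A ∩ Vzf a.rank) A}

/-- `R` codes a preorder on `P`. -/
def PreordZ (P R : ZFSet) : Prop :=
  (∀ q ∈ R, ∃ x y, q = ZFSet.pair x y ∧ x ∈ P ∧ y ∈ P) ∧
    (∀ p ∈ P, ZFSet.pair p p ∈ R) ∧
    ∀ p q r, ZFSet.pair p q ∈ R → ZFSet.pair q r ∈ R → ZFSet.pair p r ∈ R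

/-- `p` is an `(A, P)`-strongly generic condition. -/
def SGenZ (P R A p : ZFSet) : Prop :=
  p ∈ P ∧ ∀ q, q ∈ P → ZFSet.pair q p ∈ R →
    ∃ q', q' ∈ A ∧ q' ∈ P ∧
      ∀ r, r ∈ A → r ∈ P → ZFSet.pair r q' ∈ R →
        ∃ s, s ∈ P ∧ ZFSet.pair s r ∈ R ∧ ZFSet.pair s q ∈ R

/-- `G` is a `W`-generic filter on the forcing `(P, R)`. -/
def GenericFilterOn (W : Set ZFSet) (P R : ZFSet) (G : Set ZFSet) : Prop :=
  (∀ p ∈ G, p ∈ P) ∧ (∀ p ∈ G, ∀ q, q ∈ P → ZFSet.pair p q ∈ R → q ∈ G) ∧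
    (∀ p ∈ G, ∀ q ∈ G, ∃ r ∈ G, ZFSet.pair r p ∈ R ∧ ZFSet.pair r q ∈ R) ∧
    ∀ D, D ∈ W → D ⊆ P → (∀ p, p ∈ P → ∃ q, q ∈ D ∧ ZFSet.pair q p ∈ R) →
      ∃ q ∈ G, q ∈ D

/-- `A ∩ κ ∈ κ` : the ordinals of `A` below `κ` form an ordinal `< κ`. -/
def OrdSeg (A : ZFSet) (κo : Ordinal) : Prop :=
  ∃ δ < κo, ∀ x, IsOrd x → ((x ∈ A ∧ x.rank < κo) ↔ x.rank < δ)

/-- `S` is stationary in `𝒫_κ(X)`. -/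
def StatPk (κo : Ordinal) (X : ZFSet) (S : Set ZFSet) : Prop :=
  ∀ F : ZFSet, IsZFn F →
    (∀ s y, ZFSet.pair s y ∈ F → s ⊆ X ∧ s.toSet.Finite ∧ y ∈ X) →
    ∃ A ∈ S, A ⊆ X ∧ OrdSeg A κo ∧
      ∀ s, s ⊆ A → s.toSet.Finite → ∀ y, ZFSet.pair s y ∈ F → y ∈ A

/-- `M` is a `γ`-guessing model. -/
def IsGuessing (γ : Cardinal.{0}) (M : ZFSet) : Prop :=
  ∀ x : ZFSet, x ⊆ M → (∃ y, y ∈ M ∧ x ⊆ y) →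
    (∀ a, a ∈ M → a ⊆ M → zcard a < Cardinal.lift.{1,0} γ → (a ∩ x) ∈ M) →
    ∃ g, g ∈ M ∧ x = g ∩ M

/-- The transitive closure of a `ZFSet`, as a class. -/
def tcClass (x : ZFSet) : Set ZFSet := {y | ∃ n : ℕ, y ∈ (ZFSet.sUnion)^[n] x}

/-- `x ∈ H_θ`. -/
def InH (θ : Cardinal.{0}) (x : ZFSet) : Prop :=
  Cardinal.mk (tcClass x) < Cardinal.lift.{1,0} θ

/-- `M ∩ λ` is precisely the ordinal `o` (as a set of ordinals below `λ`). -/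
def TraceIsOrdinal (M : ZFSet) (lamo o : Ordinal) : Prop :=
  o ≤ lamo ∧ ∀ r < lamo, ((∃ x, x ∈ M ∧ IsOrd x ∧ x.rank = r) ↔ r < o)

/-- The principle `FS(κ⁺, γ)`. -/
def FSprin (κ γ : Cardinal.{0}) : Prop :=
  ∀ X : ZFSet, InH (Order.succ κ) X →
    ∃ 𝒢 : Set ZFSet,
      (∀ M ∈ 𝒢, IsGuessing γ M ∧ zcard M = Cardinal.lift.{1,0} κ ∧ X ∈ M) ∧
      (∀ β < (Order.succ κ).ord, ∃ o, β < o ∧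
        ∃ M ∈ 𝒢, TraceIsOrdinal M (Order.succ κ).ord o) ∧
      ∀ o < (Order.succ κ).ord, o.cof = κ →
        (∀ β < o, ∃ o', β < o' ∧ o' < o ∧
          ∃ M ∈ 𝒢, TraceIsOrdinal M (Order.succ κ).ord o') →
        ∃ M ∈ 𝒢, TraceIsOrdinal M (Order.succ κ).ord o

/-- `ā` is a `λ`-approaching sequence (of bounded subsets of `λ`). -/
def ApproachSeq (lamo : Ordinal) (a : Ordinal → Set Ordinal) : Prop :=
  ∀ ξ < lamo, ∃ β < lamo, a ξ ⊆ Set.Iio β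

/-- `otp(c) < δ`. -/
def otpLT (c : Set Ordinal.{0}) (δ : Ordinal.{0}) : Prop :=
  Ordinal.type (Subrel ((· < ·) : Ordinal → Ordinal → Prop) (· ∈ c)) < Ordinal.lift.{1,0} δ

/-- The set `B(ā)` of approachable points. -/
def Bset (lamo : Ordinal) (a : Ordinal → Set Ordinal) : Set Ordinal :=
  {δ | δ < lamo ∧ ∃ c : Set Ordinal, c ⊆ Set.Iio δ ∧ (∀ β < δ, ∃ γ ∈ c, β < γ) ∧
    otpLT c δ ∧ ∀ γ < δ, ∃ η < δ, c ∩ Set.Iio γ = a η}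

/-- `S` is nonstationary in `λ`. -/
def NonStatIn (lamo : Ordinal) (S : Set Ordinal) : Prop :=
  ∃ C, IsClubIn C lamo ∧ ∀ x ∈ S, x ∉ C

/-- `S` belongs to the approachability ideal `I[λ]`. -/
def InApproachIdeal (lamo : Ordinal) (S : Set Ordinal) : Prop :=
  ∃ (k : ℕ) (f : ℕ → Ordinal → Set Ordinal), (∀ i < k, ApproachSeq lamo (f i)) ∧
    ∃ N, NonStatIn lamo N ∧ ∀ x ∈ S, x ∈ N ∨ ∃ i < k, x ∈ Bset lamo (f i)


/-!
Let `π = clps M` be the transitive collapse of `M` onto `V_γ` and `κ̄ = π(κ)`. As `π` fixes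
`V_κ̄ ⊆ M`, every ordinal of `M` below `κ` lies below `κ̄`, so `|x| < κ̄ ≤ cf γ`. Hence `t = π[x]`
lies in `V_γ`, together with a function from the ordinal `ρ = |x|` onto `t`; so `t = π(z)` for some
`z ∈ M`, and `M` satisfies "`z` is covered by a function with domain inside `ρ`". By elementarity
this function exists in `M` and covers `z` in `V_μ`, so each element of `z` is its value at some
`ξ ∈ ρ ⊆ M`, hence is definable from parameters in `M` and lies in `M`. Thus `z ⊆ M`, and since `π`
is injective on the extensional set `M`, `z = x`.
-/

theorem mem_img {f : ZFSet → ZFSet} {s y : ZFSet} : y ∈ img f s ↔ ∃ z ∈ s, f z = y :=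
  @ZFSet.mem_image f (Classical.allZFSetDefinable _) s y

theorem card_img_le (f : ZFSet → ZFSet) (s : ZFSet) : card (img f s) ≤ card s :=
  @ZFSet.card_image_le s f (Classical.allZFSetDefinable _)

theorem zcard_eq_lift_card (x : ZFSet) : zcard x = Cardinal.lift (card x) :=
  cardinalMk_coe_sort

theorem Vzf_eq_vonNeumann (o : Ordinal.{0}) : Vzf o = V_ o := by
  induction o using WellFoundedLT.induction with
  | _ o IH =>
    ext y
    rw [mem_vonNeumann', Vzf]
    simp only [ZFSet.mem_sUnion, ZFSet.mem_range]
    constructor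
    · rintro ⟨_, ⟨i, rfl⟩, hy⟩
      exact ⟨_, Ordinal.typein_lt_self i,
        IH _ (Ordinal.typein_lt_self i) ▸ ZFSet.mem_powerset.1 hy⟩
    · rintro ⟨a, ha, hy⟩
      obtain ⟨i, hi⟩ := Ordinal.typein_surj (α := o.ToType) (· < ·)
        (ha.trans_eq (Ordinal.type_toType o).symm)
      refine ⟨_, ⟨i, rfl⟩, ZFSet.mem_powerset.2 ?_⟩
      rwa [hi, IH a ha]

theorem mem_Vzf {o : Ordinal.{0}} {y : ZFSet} : y ∈ Vzf o ↔ y.rank < o := by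
  rw [Vzf_eq_vonNeumann, mem_vonNeumann]

theorem isTransitive_Vzf (o : Ordinal.{0}) : (Vzf o).IsTransitive := by
  rw [Vzf_eq_vonNeumann]
  exact isTransitive_vonNeumann o

theorem isOrd_iff_isOrdinal {x : ZFSet} : IsOrd x ↔ x.IsOrdinal :=
  isOrdinal_iff_forall_mem_isTransitive.symm

theorem mem_Vzf_of_subset_of_card_lt_cof {γ : Ordinal.{0}} {s : ZFSet.{0}}
    (hs : s ⊆ Vzf γ) (hγ : card s < γ.cof) : s ∈ Vzf γ := by
  rw [mem_Vzf]
  refine lt_of_le_of_lt (rank_le_iff.2 fun y hy => ?_)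
    (Ordinal.lift_iSup_add_one_lt_of_lt_cof (β := s) (f := fun y => rank y.1) ?_
      fun y => mem_Vzf.1 (hs y.2))
  · exact (Order.lt_succ _).trans_le
      (le_ciSup (f := fun y : s => rank y.1 + 1) Ordinal.bddAbove_of_small ⟨y, hy⟩)
  · rwa [Cardinal.lift_id'.{0, 1}, cardinalMk_coe_sort, ← Ordinal.lift_cof, Cardinal.lift_lt]

theorem pair_mem_Vzf {γ : Ordinal.{0}} (hγ : Order.IsSuccLimit γ) {a b : ZFSet}
    (ha : a ∈ Vzf γ) (hb : b ∈ Vzf γ) : ({a, b} : ZFSet) ∈ Vzf γ := by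
  rw [mem_Vzf] at *
  rw [rank_pair]
  exact max_lt (hγ.succ_lt ha) (hγ.succ_lt hb)

namespace Fml

def and (φ ψ : Fml) : Fml := .neg (.imp φ (.neg ψ))

def or (φ ψ : Fml) : Fml := .imp (.neg φ) ψ

def iff (φ ψ : Fml) : Fml := (φ.imp ψ).and (ψ.imp φ)

def ex (φ : Fml) : Fml := .neg (.all (.neg φ))

end Fml

def vcons (x : ZFSet) (v : ℕ → ZFSet) : ℕ → ZFSet := fun n => match n with
  | 0 => x
  | n + 1 => v n

@[simp] theorem vcons_zero (x : ZFSet) (v : ℕ → ZFSet) : vcons x v 0 = x := rfl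

@[simp] theorem vcons_succ (x : ZFSet) (v : ℕ → ZFSet) (n : ℕ) : vcons x v (n + 1) = v n := rfl

theorem forall_vcons_mem {x : ZFSet} {v : ℕ → ZFSet} {A : ZFSet} :
    (∀ n, vcons x v n ∈ A) ↔ x ∈ A ∧ ∀ n, v n ∈ A :=
  ⟨fun h => ⟨h 0, fun n => h (n + 1)⟩, fun ⟨hx, hv⟩ n => by cases n <;> simp [hx, hv]⟩

section Sat

variable {A : ZFSet} {φ ψ : Fml} {v : ℕ → ZFSet}

@[simp] theorem sat_mem {i j : ℕ} : Sat A (.mem i j) v ↔ v i ∈ v j := Iff.rfl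

@[simp] theorem sat_eq {i j : ℕ} : Sat A (.eq i j) v ↔ v i = v j := Iff.rfl

@[simp] theorem sat_imp : Sat A (.imp φ ψ) v ↔ (Sat A φ v → Sat A ψ v) := Iff.rfl

@[simp] theorem sat_all : Sat A (.all φ) v ↔ ∀ x ∈ A, Sat A φ (vcons x v) := Iff.rfl

@[simp] theorem sat_and : Sat A (φ.and ψ) v ↔ Sat A φ v ∧ Sat A ψ v := by
  simp only [Fml.and, Sat]
  tauto

@[simp] theorem sat_or : Sat A (φ.or ψ) v ↔ Sat A φ v ∨ Sat A ψ v := by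
  simp only [Fml.or, Sat]
  tauto

@[simp] theorem sat_iff : Sat A (φ.iff ψ) v ↔ (Sat A φ v ↔ Sat A ψ v) := by
  simp only [Fml.iff, sat_and, sat_imp]
  tauto

@[simp] theorem sat_ex : Sat A φ.ex v ↔ ∃ x ∈ A, Sat A φ (vcons x v) := by
  simp only [Fml.ex, Sat, not_forall, not_not, exists_prop]
  rfl

end Sat

/- Formulas address their free variables by index into the valuation, index `n` becoming `n + 1`
under a quantifier. `pairF p a b` says `v p = (v a, v b)` and `memGraphF f a b` says
`(v a, v b) ∈ v f`, with all quantifiers ranging over the structure `A`; the predicates `…In A`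
are these relativized meanings. -/
def pairF (p a b : ℕ) : Fml :=
  .all ((Fml.mem 0 (p + 1)).iff
    ((Fml.all ((Fml.mem 0 1).iff (.eq 0 (a + 2)))).or
      (Fml.all ((Fml.mem 0 1).iff ((Fml.eq 0 (a + 2)).or (.eq 0 (b + 2)))))))

def IsPairIn (A p a b : ZFSet) : Prop :=
  ∀ t ∈ A, t ∈ p ↔ ((∀ s ∈ A, s ∈ t ↔ s = a) ∨ ∀ s ∈ A, s ∈ t ↔ s = a ∨ s = b)

def memGraphF (f a b : ℕ) : Fml := Fml.ex ((Fml.mem 0 (f + 1)).and (pairF 0 (a + 1) (b + 1)))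

def MemGraphIn (A f a b : ZFSet) : Prop := ∃ q ∈ A, q ∈ f ∧ IsPairIn A q a b

def functionalF (f : ℕ) : Fml :=
  .all (.all (.all (((memGraphF (f + 3) 2 1).and (memGraphF (f + 3) 2 0)).imp (.eq 1 0))))

def FunctionalIn (A f : ZFSet) : Prop :=
  ∀ a ∈ A, ∀ b ∈ A, ∀ b' ∈ A, MemGraphIn A f a b → MemGraphIn A f a b' → b = b'

def coversF (f ρ z : ℕ) : Fml :=
  .all ((Fml.mem 0 (z + 1)).imp (Fml.ex ((Fml.mem 0 (ρ + 2)).and (memGraphF (f + 2) 0 1))))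

def CoversIn (A f ρ z : ZFSet) : Prop :=
  ∀ w ∈ A, w ∈ z → ∃ ξ ∈ A, ξ ∈ ρ ∧ MemGraphIn A f ξ w

def coveredF (ρ z : ℕ) : Fml := Fml.ex ((functionalF 0).and (coversF 0 (ρ + 1) (z + 1)))

def CoveredIn (A ρ z : ZFSet) : Prop := ∃ f ∈ A, FunctionalIn A f ∧ CoversIn A f ρ z

section Sat

variable {A : ZFSet} {v : ℕ → ZFSet}

@[simp] theorem sat_pairF {p a b : ℕ} : Sat A (pairF p a b) v ↔ IsPairIn A (v p) (v a) (v b) := by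
  simp [pairF, IsPairIn]

@[simp] theorem sat_memGraphF {f a b : ℕ} :
    Sat A (memGraphF f a b) v ↔ MemGraphIn A (v f) (v a) (v b) := by
  simp [memGraphF, MemGraphIn]

@[simp] theorem sat_functionalF {f : ℕ} : Sat A (functionalF f) v ↔ FunctionalIn A (v f) := by
  simp [functionalF, FunctionalIn]

@[simp] theorem sat_coversF {f ρ z : ℕ} :
    Sat A (coversF f ρ z) v ↔ CoversIn A (v f) (v ρ) (v z) := by
  simp [coversF, CoversIn]

@[simp] theorem sat_coveredF {ρ z : ℕ} : Sat A (coveredF ρ z) v ↔ CoveredIn A (v ρ) (v z) := by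
  simp [coveredF, CoveredIn]

end Sat

theorem eq_iff_forall_mem_of_subset {A s t : ZFSet} (hs : s ⊆ A) (ht : t ⊆ A) :
    (∀ y ∈ A, y ∈ s ↔ y ∈ t) ↔ s = t :=
  ⟨fun h => ZFSet.ext fun y => ⟨fun hy => (h y (hs hy)).1 hy, fun hy => (h y (ht hy)).2 hy⟩,
    fun h _ _ => h ▸ Iff.rfl⟩

section Absoluteness

variable {A : ZFSet}

theorem singleton_mem_of_pair_mem (hpair : ∀ a ∈ A, ∀ b ∈ A, ({a, b} : ZFSet) ∈ A) {a : ZFSet}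
    (ha : a ∈ A) : ({a} : ZFSet) ∈ A := by
  simpa [ZFSet.ext_iff] using hpair a ha a ha

theorem pair_mem (hpair : ∀ a ∈ A, ∀ b ∈ A, ({a, b} : ZFSet) ∈ A) {a b : ZFSet} (ha : a ∈ A)
    (hb : b ∈ A) : ZFSet.pair a b ∈ A :=
  hpair _ (singleton_mem_of_pair_mem hpair ha) _ (hpair a ha b hb)

theorem isPairIn_iff (hA : A.IsTransitive) (hpair : ∀ a ∈ A, ∀ b ∈ A, ({a, b} : ZFSet) ∈ A)
    {p a b : ZFSet} (hp : p ∈ A) (ha : a ∈ A) (hb : b ∈ A) :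
    IsPairIn A p a b ↔ p = ZFSet.pair a b := by
  have hsingleton := singleton_mem_of_pair_mem hpair ha
  have hdoubleton : ({a, b} : ZFSet) ∈ A := hpair a ha b hb
  have hdecode : ∀ t ∈ A, ((∀ s ∈ A, s ∈ t ↔ s = a) ∨ ∀ s ∈ A, s ∈ t ↔ s = a ∨ s = b) ↔
      t ∈ ZFSet.pair a b := fun t ht => by
    have h₁ := eq_iff_forall_mem_of_subset (hA t ht) (hA _ hsingleton)
    have h₂ := eq_iff_forall_mem_of_subset (hA t ht) (hA _ hdoubleton)
    simp only [ZFSet.mem_singleton, ZFSet.mem_pair] at h₁ h₂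
    rw [h₁, h₂, ZFSet.pair, ZFSet.mem_pair]
  rw [IsPairIn, ← eq_iff_forall_mem_of_subset (hA p hp) (hA _ (pair_mem hpair ha hb))]
  exact forall₂_congr fun t ht => by rw [hdecode t ht]

theorem memGraphIn_iff (hA : A.IsTransitive) (hpair : ∀ a ∈ A, ∀ b ∈ A, ({a, b} : ZFSet) ∈ A)
    {f a b : ZFSet} (ha : a ∈ A) (hb : b ∈ A) :
    MemGraphIn A f a b ↔ ZFSet.pair a b ∈ f := by
  have hab := pair_mem hpair ha hb
  constructor
  · rintro ⟨q, hq, hqf, hpq⟩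
    rwa [(isPairIn_iff hA hpair hq ha hb).1 hpq] at hqf
  · exact fun h => ⟨_, hab, h, (isPairIn_iff hA hpair hab ha hb).2 rfl⟩

end Absoluteness

theorem IsIsoOn.sat_iff_sat {A B : ZFSet} {σ : ZFSet → ZFSet} (hσ : IsIsoOn A B σ) (φ : Fml)
    {v : ℕ → ZFSet} (hv : ∀ n, v n ∈ A) : Sat A φ v ↔ Sat B φ (fun n => σ (v n)) := by
  obtain ⟨hmaps, hsurj, hinj, hmem⟩ := hσ
  induction φ generalizing v with
  | mem i j => exact hmem _ (hv i) _ (hv j)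
  | eq i j => exact ⟨congrArg σ, hinj _ (hv i) _ (hv j)⟩
  | imp φ ψ ihφ ihψ => exact imp_congr (ihφ hv) (ihψ hv)
  | neg φ ih => exact not_congr (ih hv)
  | all φ ih =>
    have hcons : ∀ x, (fun n => σ (vcons x v n)) = vcons (σ x) fun n => σ (v n) := fun x => by
      funext n; cases n <;> rfl
    simp only [sat_all]
    constructor
    · intro h y hy
      obtain ⟨x, hx, rfl⟩ := hsurj y hy
      rw [← hcons, ← ih (forall_vcons_mem.2 ⟨hx, hv⟩)]
      exact h x hx
    · intro h x hx
      rw [ih (forall_vcons_mem.2 ⟨hx, hv⟩), hcons]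
      exact h (σ x) (hmaps x hx)

theorem IsIsoOn.coveredIn_iff {A B ρ z : ZFSet} {σ : ZFSet → ZFSet} (hσ : IsIsoOn A B σ)
    (hρ : ρ ∈ A) (hz : z ∈ A) : CoveredIn A ρ z ↔ CoveredIn B (σ ρ) (σ z) := by
  simpa using hσ.sat_iff_sat (coveredF 0 1) (v := vcons ρ fun _ => z)
    (forall_vcons_mem.2 ⟨hρ, fun _ => hz⟩)

def IsExtensional (M : ZFSet) : Prop :=
  ∀ ⦃a⦄, a ∈ M → ∀ ⦃b⦄, b ∈ M → (∀ t ∈ M, t ∈ a ↔ t ∈ b) → a = b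

namespace ElemSub

variable {M A : ZFSet}

theorem isExtensional (h : ElemSub M A) (hA : A.IsTransitive) : IsExtensional M := by
  intro a ha b hb hab
  have hv : ∀ n, vcons a (vcons b fun _ => a) n ∈ M :=
    forall_vcons_mem.2 ⟨ha, forall_vcons_mem.2 ⟨hb, fun _ => ha⟩⟩
  have hextA : Sat A ((Fml.all ((Fml.mem 0 1).iff (.mem 0 2))).imp (.eq 0 1))
      (vcons a (vcons b fun _ => a)) := by
    simpa using (eq_iff_forall_mem_of_subset (hA a (h.1 ha)) (hA b (h.1 hb))).1
  have hextM := (h.2 _ _ hv).2 hextA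
  simp only [sat_imp, sat_all, sat_iff, sat_mem, sat_eq, vcons_zero, vcons_succ] at hextM
  exact hextM hab

theorem mem_of_existsUnique (h : ElemSub M A) {φ : Fml} {v : ℕ → ZFSet} (hv : ∀ n, v n ∈ M)
    {w : ZFSet} (hw : w ∈ A) (hφ : Sat A φ (vcons w v))
    (huniq : ∀ w' ∈ A, Sat A φ (vcons w' v) → w' = w) : w ∈ M := by
  have hex : Sat M φ.ex v := (h.2 _ _ hv).2 (sat_ex.2 ⟨w, hw, hφ⟩)
  obtain ⟨w', hw', hφ'⟩ := sat_ex.1 hex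
  rwa [← huniq w' (h.1 hw') ((h.2 _ _ (forall_vcons_mem.2 ⟨hw', hv⟩)).1 hφ')]

theorem subset_of_coveredIn (h : ElemSub M A) (hA : A.IsTransitive) {ρ z : ZFSet} (hρ : ρ ∈ M)
    (hρM : ∀ ξ ∈ ρ, ξ ∈ M) (hz : z ∈ M) (hcov : CoveredIn M ρ z) : ∀ w ∈ z, w ∈ M := by
  obtain ⟨f, hf, hfM⟩ := hcov
  have hv : ∀ n, vcons f (vcons ρ fun _ => z) n ∈ M :=
    forall_vcons_mem.2 ⟨hf, forall_vcons_mem.2 ⟨hρ, fun _ => hz⟩⟩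
  obtain ⟨hfun, hcovA⟩ : FunctionalIn A f ∧ CoversIn A f ρ z := by
    simpa using (h.2 ((functionalF 0).and (coversF 0 1 2)) _ hv).1 (by simpa using hfM)
  intro w hw
  have hwA : w ∈ A := hA z (h.1 hz) hw
  obtain ⟨ξ, hξA, hξρ, hfξw⟩ := hcovA w hwA hw
  refine h.mem_of_existsUnique (φ := memGraphF 2 1 0) (v := vcons ξ fun _ => f)
    (forall_vcons_mem.2 ⟨hρM ξ hξρ, fun _ => hf⟩) hwA (by simpa using hfξw) fun w' hw' hfξw' => ?_
  exact hfun ξ hξA w' hw' w hwA (by simpa using hfξw') hfξw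

end ElemSub

theorem mem_clps {N x w : ZFSet} : w ∈ clps N x ↔ ∃ y ∈ x, y ∈ N ∧ clps N y = w := by
  rw [clps, mem_img]
  refine exists_congr fun y => ?_
  simp only [ZFSet.mem_sep, and_assoc]
  exact and_congr_right fun hyx => by rw [dif_pos (rank_lt_of_mem hyx)]

theorem clps_mem_clps {N x y : ZFSet} (hyx : y ∈ x) (hyN : y ∈ N) : clps N y ∈ clps N x :=
  mem_clps.2 ⟨y, hyx, hyN, rfl⟩

theorem clps_eq_self {N : ZFSet} {β : Ordinal.{0}} (hV : Vzf β ⊆ N) {x : ZFSet}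
    (hx : x ∈ Vzf β) : clps N x = x := by
  induction x using ZFSet.inductionOn with
  | h x IH =>
    have hmem : ∀ y ∈ x, y ∈ Vzf β := isTransitive_Vzf β x hx
    ext w
    rw [mem_clps]
    constructor
    · rintro ⟨y, hyx, -, rfl⟩
      rwa [IH y hyx (hmem y hyx)]
    · exact fun hw => ⟨w, hw, hV (hmem w hw), IH w hw (hmem w hw)⟩

namespace IsExtensional

variable {M : ZFSet}

theorem injOn_clps (hM : IsExtensional M) : Set.InjOn (clps M) M := by
  intro a ha b hb hab
  induction a using ZFSet.inductionOn generalizing b with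
  | h a IH =>
    refine hM ha hb fun t ht => ⟨fun hta => ?_, fun htb => ?_⟩
    · obtain ⟨y, hyb, hyM, hy⟩ := mem_clps.1 (hab ▸ clps_mem_clps hta ht)
      rwa [IH t hta ht hyM hy.symm]
    · obtain ⟨y, hya, hyM, hy⟩ := mem_clps.1 (hab ▸ clps_mem_clps htb ht)
      rwa [← IH y hya hyM ht hy]

theorem isIsoOn_clps (hM : IsExtensional M) : IsIsoOn M (img (clps M) M) (clps M) := by
  refine ⟨fun x hx => mem_img.2 ⟨x, hx, rfl⟩, fun y hy => mem_img.1 hy,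
    fun x hx y hy => hM.injOn_clps hx hy, fun x hx y hy => ⟨fun h => clps_mem_clps h hx, ?_⟩⟩
  intro h
  obtain ⟨z, hzy, hzM, hz⟩ := mem_clps.1 h
  rwa [← hM.injOn_clps hzM hx hz]

theorem eq_of_clps_eq_img (hM : IsExtensional M) {x z : ZFSet} (hz : ∀ w ∈ z, w ∈ M)
    (hx : ∀ y ∈ x, y ∈ M) (h : clps M z = img (clps M) x) : z = x := by
  ext w
  constructor
  · intro hw
    obtain ⟨y, hyx, hy⟩ := mem_img.1 (h ▸ clps_mem_clps hw (hz w hw))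
    rwa [← hM.injOn_clps (hx y hyx) (hz w hw) hy]
  · intro hw
    obtain ⟨y, hyz, hyM, hy⟩ := mem_clps.1 (h ▸ mem_img.2 ⟨w, hw, rfl⟩)
    rwa [← hM.injOn_clps hyM (hx w hw) hy]

end IsExtensional

theorem min_rank_le_rank_clps {N δ : ZFSet} {β : Ordinal.{0}} (hV : Vzf β ⊆ N)
    (hδ : δ.IsOrdinal) : min δ.rank β ≤ (clps N δ).rank := by
  refine le_of_forall_lt fun o ho => ?_
  rw [lt_min_iff] at ho
  have hoV : o.toZFSet ∈ Vzf β := mem_Vzf.2 (by rw [Ordinal.rank_toZFSet]; exact ho.2)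
  have hoδ : o.toZFSet ∈ δ :=
    ((isOrdinal_toZFSet o).rank_lt_iff_mem hδ).1 (by rw [Ordinal.rank_toZFSet]; exact ho.1)
  simpa [clps_eq_self hV hoV] using rank_lt_of_mem (clps_mem_clps hoδ (hV hoV))

theorem kappaOf_le_rank_clps {κ : Ordinal.{0}} {M k : ZFSet} (hkOrd : IsOrd k)
    (hkκ : k.rank = κ) (hV : Vzf (clps M k).rank ⊆ M) : kappaOf κ M ≤ (clps M k).rank := by
  refine csSup_le' ?_
  rintro _ ⟨δ, hδM, hδ, rfl, hδκ⟩
  rw [isOrd_iff_isOrdinal] at hδ hkOrd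
  have hδk : δ ∈ k := (hδ.rank_lt_iff_mem hkOrd).1 (hkκ ▸ hδκ)
  have h := (min_rank_le_rank_clps hV hδ).trans_lt (rank_lt_of_mem (clps_mem_clps hδk hδM))
  exact ((min_lt_iff.1 h).resolve_right (lt_irrefl _)).le

theorem isSuccLimit_of_card_lt_cof {γ : Ordinal.{0}} {t : ZFSet} (ht : t.Nonempty)
    (htγ : card t < γ.cof) : Order.IsSuccLimit γ := by
  obtain ⟨w, hw⟩ := ht
  have hw1 : 1 ≤ card t := card_singleton (x := w) ▸ card_mono fun y hy => by
    rwa [mem_singleton.1 hy]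
  exact Ordinal.one_lt_cof_iff.1 (hw1.trans_lt htγ)

theorem coveredIn_Vzf {γ : Ordinal.{0}} {ρ t : ZFSet} (hρ : ρ ∈ Vzf γ) (ht : t ⊆ Vzf γ)
    (htρ : card t ≤ card ρ) (htγ : card t < γ.cof) : CoveredIn (Vzf γ) ρ t := by
  have hpair : t.Nonempty → ∀ a ∈ Vzf γ, ∀ b ∈ Vzf γ, ({a, b} : ZFSet) ∈ Vzf γ :=
    fun hne _ ha _ hb => pair_mem_Vzf (isSuccLimit_of_card_lt_cof hne htγ) ha hb
  obtain ⟨e⟩ : Nonempty (t ↪ ρ) := by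
    rwa [← Cardinal.le_def, cardinalMk_coe_sort, cardinalMk_coe_sort, Cardinal.lift_le]
  set g := ZFSet.range fun w : t => ZFSet.pair (e w) w
  have hg : g ∈ Vzf γ := by
    refine mem_Vzf_of_subset_of_card_lt_cof (fun q hq => ?_) (lt_of_le_of_lt ?_ htγ)
    · obtain ⟨w, rfl⟩ := mem_range.1 hq
      exact pair_mem (hpair ⟨w, w.2⟩) (isTransitive_Vzf γ ρ hρ (e w).2) (ht w.2)
    · have := lift_card_range_le (f := fun w : t => ZFSet.pair (e w) w)
      rwa [Cardinal.lift_id'.{0, 1}, cardinalMk_coe_sort, Cardinal.lift_le] at this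
  refine ⟨g, hg, fun a ha b hb b' hb' hab hab' => ?_, fun w hw hwt => ?_⟩
  · have hne : t.Nonempty := by
      obtain ⟨q, -, hq, -⟩ := hab
      obtain ⟨i, -⟩ := mem_range.1 hq
      exact ⟨i, i.2⟩
    have hgraph := fun {b} (hb : b ∈ Vzf γ) =>
      memGraphIn_iff (f := g) (isTransitive_Vzf γ) (hpair hne) ha hb
    obtain ⟨j, hj⟩ := mem_range.1 ((hgraph hb).1 hab)
    obtain ⟨j', hj'⟩ := mem_range.1 ((hgraph hb').1 hab')
    rw [pair_inj] at hj hj'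
    rw [← hj.2, ← hj'.2, e.injective (Subtype.ext (hj.1.trans hj'.1.symm))]
  · refine ⟨e ⟨w, hwt⟩, isTransitive_Vzf γ ρ hρ (e _).2, (e _).2, ?_⟩
    exact (memGraphIn_iff (isTransitive_Vzf γ) (hpair ⟨w, hwt⟩) (isTransitive_Vzf γ ρ hρ (e _).2)
      hw).2 (mem_range.2 ⟨⟨w, hwt⟩, rfl⟩)

theorem stmt6_general (κ μ : Ordinal) (M : ZFSet)
    (hME : ElemSub M (Vzf μ)) (hMag : IsMagidor κ M) :
    ∀ x : ZFSet, x ∈ Vzf μ → (∀ y, y ∈ x → y ∈ M) →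
      zcard x < Cardinal.lift.{1,0} (kappaOf κ M).card → x ∈ M := by
  obtain ⟨γ, -, himg, k, -, hkOrd, hkκ, hcof, hV⟩ := hMag
  set κ' := (clps M k).rank
  intro x _ hxM hx
  have hext := hME.isExtensional (isTransitive_Vzf μ)
  have hiso := hext.isIsoOn_clps
  rw [himg] at hiso
  have hxκ : card x < κ'.card := by
    rw [zcard_eq_lift_card, Cardinal.lift_lt] at hx
    exact hx.trans_le (Ordinal.card_le_card (kappaOf_le_rank_clps hkOrd hkκ hV))
  set ρ := (card x).ord.toZFSet
  have hρ : ρ ∈ Vzf κ' := mem_Vzf.2 <| by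
    rw [Ordinal.rank_toZFSet]
    exact (Cardinal.ord_lt_ord.2 hxκ).trans_le (Cardinal.ord_card_le _)
  set t := img (clps M) x
  have ht : t ⊆ Vzf γ := fun w hw => by
    obtain ⟨y, hy, rfl⟩ := mem_img.1 hw
    exact hiso.1 y (hxM y hy)
  have htγ : card t < γ.cof := (card_img_le _ x).trans_lt (hxκ.trans_le hcof)
  obtain ⟨z, hz, hzt⟩ := hiso.2.1 t (mem_Vzf_of_subset_of_card_lt_cof ht htγ)
  have hcov : CoveredIn M ρ z := by
    rw [hiso.coveredIn_iff (hV hρ) hz, hzt]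
    refine coveredIn_Vzf (hiso.1 ρ (hV hρ)) ht ?_ htγ
    rw [clps_eq_self hV hρ, Ordinal.card_toZFSet, Cardinal.card_ord]
    exact card_img_le _ x
  have hzM := hME.subset_of_coveredIn (isTransitive_Vzf μ) (hV hρ)
    (fun ξ hξ => hV (isTransitive_Vzf _ ρ hρ hξ)) hz hcov
  rwa [← hext.eq_of_clps_eq_img hzM hxM hzt]

/-- a `κ`-Magidor model `M ≺ V_μ` is closed under sequences of length
`< κ_M = sup (M ∩ κ)` : every subset of `M` of size `< κ_M` that is an element of `V_μ`
belongs to `M`. -/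
theorem stmt6 (κ μ : Ordinal) (hsc : MagidorSupercompact κ) (M : ZFSet)
    (hME : ElemSub M (Vzf μ)) (hMag : IsMagidor κ M) :
    ∀ x : ZFSet, x ∈ Vzf μ → (∀ y, y ∈ x → y ∈ M) →
      zcard x < Cardinal.lift.{1,0} (kappaOf κ M).card → x ∈ M :=
  stmt6_general κ μ M hME hMag

end GM
end
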